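/- arXiv:2103.03287 — 4 statements merged into one kernel-verified Lean document; each statement's English description precedes it below -/
import Mathlib

section
/- If both π^s(θ₀^r) < C' and π^s(θ₁^r) < C', then the epistemic signaling game with C < Δu^s₁₀(θ₀^s) admits no pooling PBE: there is no receiver strategy σ^r with σ^r(a₀|m₀,θ₀^r) = 1, σ^r(a₁|m₀,θ₁^r) = 1 satisfying γ^s(σ^r) = C' (ruling out pooling at m₀), and no receiver strategy with σ^r(a₀|m₁,θ₀^r) = 1, σ^r(a₁|m₁,θ₁^r) = 1 satisfying γ^s(σ^r) = −C' (ruling out pooling at m₁). -/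
theorem mul_add_sub_one_mul_le {p q x y : ℝ} (hp : 0 ≤ p) (hq : 0 ≤ q) (hx : x ≤ 1)
    (hy : y ≤ 1) : x * p + (y - 1) * q ≤ p := by
  have hxp : x * p ≤ p := mul_le_of_le_one_left hp hx
  have hyq : (y - 1) * q ≤ 0 := mul_nonpos_of_nonpos_of_nonneg (by linarith) hq
  linarith

theorem stmt_6_general
    (πs0 πs1 C' : ℝ)
    (hπ0 : 0 ≤ πs0) (hπ1 : 0 ≤ πs1)
    (h0 : πs0 < C') :
    ∀ r00 r01 r10 r11 : ℝ,
      0 ≤ r00 → r00 ≤ 1 → 0 ≤ r01 → r01 ≤ 1 →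
      0 ≤ r10 → r10 ≤ 1 → 0 ≤ r11 → r11 ≤ 1 →
      ¬(r00 = 0 ∧ r01 = 1 ∧ (r10 - r00) * πs0 + (r11 - r01) * πs1 = C')
        ∧ ¬(r10 = 0 ∧ r11 = 1 ∧ (r10 - r00) * πs0 + (r11 - r01) * πs1 = -C') := by
  intro r00 r01 r10 r11 _ hr00 _ hr01 _ hr10 _ hr11
  refine ⟨?_, ?_⟩
  · rintro ⟨rfl, rfl, hγ⟩
    have := mul_add_sub_one_mul_le hπ0 hπ1 hr10 hr11
    linarith
  · rintro ⟨rfl, rfl, hγ⟩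
    have := mul_add_sub_one_mul_le hπ0 hπ1 hr00 hr01
    linarith

/-- if π^s(θ₀^r) < C' and π^s(θ₁^r) < C' then there is no pooling
PBE: no receiver strategy compatible with pooling at m₀ satisfies γ^s(σ^r) = C',
and none compatible with pooling at m₁ satisfies γ^s(σ^r) = −C'.
Here `rmθ = σ^r(a₁|m,θ^r)` and
γ^s(σ^r) = (r10 − r00)·π^s(θ₀^r) + (r11 − r01)·π^s(θ₁^r). -/
theorem stmt_6
    (πs0 πs1 C' : ℝ)
    (hπ0 : 0 ≤ πs0) (hπ1 : 0 ≤ πs1) (hπ : πs0 + πs1 = 1)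
    (hC'0 : 0 < C') (hC'1 : C' < 1)
    (h0 : πs0 < C') (h1 : πs1 < C') :
    ∀ r00 r01 r10 r11 : ℝ,
      0 ≤ r00 → r00 ≤ 1 → 0 ≤ r01 → r01 ≤ 1 →
      0 ≤ r10 → r10 ≤ 1 → 0 ≤ r11 → r11 ≤ 1 →
      ¬(r00 = 0 ∧ r01 = 1 ∧ (r10 - r00) * πs0 + (r11 - r01) * πs1 = C')
        ∧ ¬(r10 = 0 ∧ r11 = 1 ∧ (r10 - r00) * πs0 + (r11 - r01) * πs1 = -C') :=
  stmt_6_general πs0 πs1 C' hπ0 hπ1 h0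
end

section
/- At any partially-separating PBE of the epistemic signaling game, the sender's equilibrium strategy σ^s* satisfies γ^r(σ^s*, m₀, θ₀^r) < 0 and γ^r(σ^s*, m₁, θ₁^r) > 0. More precisely: if a strategy profile (σ^s*, σ^r*) satisfies the mutual best-response conditions, σ^s* is neither separating nor pooling, γ^s(σ^r*) = C' with C' ∈ (0,1), and the structural conditions of Lemmas 2–3 hold (monotonicity γ^r(·,m,θ₀^r) < γ^r(·,m,θ₁^r) on on-path messages, and the sign conditions γ^r(σ,m₀,θ₀^r)+γ^r(σ,m₁,θ₀^r) < 0 < γ^r(σ,m₀,θ₁^r)+γ^r(σ,m₁,θ₁^r)), then assuming γ^r(σ^s*,m₀,θ₀^r) ≥ 0 forces γ^s(σ^r*) ≤ 0, a contradiction with γ^s(σ^r*) = C' > 0. -/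
/-!
If either conclusion fails, monotonicity in the receiver type together with the sign
conditions gives γ^r(σ^s*, m₁, θ₀^r) < 0 < γ^r(σ^s*, m₀, θ₁^r). The receiver of type θ₁^r
then plays a₁ after m₀ and the receiver of type θ₀^r plays a₀ after m₁, so no receiver type
is more likely to play a₁ after m₁ than after m₀. Hence γ^s(σ^r*) ≤ 0, contradicting
sender indifference γ^s(σ^r*) = C' > 0.
-/

lemma sub_mul_add_sub_mul_nonpos {a b c d p q : ℝ} (hab : a ≤ b) (hcd : c ≤ d)
    (hp : 0 ≤ p) (hq : 0 ≤ q) : (a - b) * p + (c - d) * q ≤ 0 :=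
  add_nonpos (mul_nonpos_of_nonpos_of_nonneg (sub_nonpos.2 hab) hp)
    (mul_nonpos_of_nonpos_of_nonneg (sub_nonpos.2 hcd) hq)

lemma cross_signs_of_not_diagonal_signs {g00 g01 g10 g11 : ℝ}
    (hmono0 : g00 < g01) (hmono1 : g10 < g11) (hsgn0 : g00 + g10 < 0) (hsgn1 : g01 + g11 > 0)
    (h : ¬(g00 < 0 ∧ 0 < g11)) : g10 < 0 ∧ 0 < g01 := by
  rw [not_and_or, not_lt, not_lt] at h
  rcases h with h | h <;> constructor <;> linarith

theorem stmt_7_general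
    (πs0 πs1 C' : ℝ)
    (r00 r01 r10 r11 g00 g01 g10 g11 : ℝ)
    (hπ0 : 0 ≤ πs0) (hπ1 : 0 ≤ πs1)
    (hC'0 : 0 < C')
    (hr00 : 0 ≤ r00)
    (hr11' : r11 ≤ 1)
    -- receiver best responses after (on-path) messages
    (hbr01p : 0 < g01 → r01 = 1)
    (hbr10n : g10 < 0 → r10 = 0)
    -- sender indifference γ^s(σ^r*) = C'
    (hind : (r10 - r00) * πs0 + (r11 - r01) * πs1 = C')
    -- monotonicity in receiver type (Lemma 2, eq. (6))
    (hmono0 : g00 < g01) (hmono1 : g10 < g11)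
    -- prior-preference sign conditions (Lemma 2, eq. (7))
    (hsgn0 : g00 + g10 < 0) (hsgn1 : g01 + g11 > 0) :
    g00 < 0 ∧ 0 < g11 := by
  by_contra hdiag
  obtain ⟨hg10, hg01⟩ := cross_signs_of_not_diagonal_signs hmono0 hmono1 hsgn0 hsgn1 hdiag
  have hgain : (r10 - r00) * πs0 + (r11 - r01) * πs1 ≤ 0 :=
    sub_mul_add_sub_mul_nonpos (by rw [hbr10n hg10]; exact hr00)
      (by rw [hbr01p hg01]; exact hr11') hπ0 hπ1
  linarith

/-- at any partially-separating PBE the sender's strategy satisfies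
γ^r(σ^s*,m₀,θ₀^r) < 0 and γ^r(σ^s*,m₁,θ₁^r) > 0.
Here `sθ = σ^s*(m₀|θ^s)` (so σ^s*(m₁|θ^s) = 1 − sθ), `pij = π^r(θᵢ^s|θⱼ^r)`,
`rmθ = σ^r*(a₁|m,θ^r)`, `gmθ = γ^r(σ^s*,m,θ^r)`, with on-path best responses,
partial separation, sender indifference γ^s(σ^r*) = C' ∈ (0,1), monotonicity in
the receiver type, and the prior-preference sign conditions. -/
theorem stmt_7
    (p00 p10 p01 p11 Δ0 Δ1 πs0 πs1 C' : ℝ)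
    (s0 s1 r00 r01 r10 r11 g00 g01 g10 g11 : ℝ)
    (hΔ0 : Δ0 < 0) (hΔ1 : 0 < Δ1)
    (hπ0 : 0 ≤ πs0) (hπ1 : 0 ≤ πs1) (hπ : πs0 + πs1 = 1)
    (hC'0 : 0 < C') (hC'1 : C' < 1)
    (hs0 : 0 ≤ s0) (hs0' : s0 ≤ 1) (hs1 : 0 ≤ s1) (hs1' : s1 ≤ 1)
    (hr00 : 0 ≤ r00) (hr00' : r00 ≤ 1) (hr01 : 0 ≤ r01) (hr01' : r01 ≤ 1)
    (hr10 : 0 ≤ r10) (hr10' : r10 ≤ 1) (hr11 : 0 ≤ r11) (hr11' : r11 ≤ 1)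
    -- definitions of γ^r(σ^s*, m, θ^r)
    (hg00 : g00 = s0 * p00 * Δ0 + s1 * p10 * Δ1)
    (hg01 : g01 = s0 * p01 * Δ0 + s1 * p11 * Δ1)
    (hg10 : g10 = (1 - s0) * p00 * Δ0 + (1 - s1) * p10 * Δ1)
    (hg11 : g11 = (1 - s0) * p01 * Δ0 + (1 - s1) * p11 * Δ1)
    -- receiver best responses after (on-path) messages
    (hbr00n : g00 < 0 → r00 = 0) (hbr00p : 0 < g00 → r00 = 1)
    (hbr01n : g01 < 0 → r01 = 0) (hbr01p : 0 < g01 → r01 = 1)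
    (hbr10n : g10 < 0 → r10 = 0) (hbr10p : 0 < g10 → r10 = 1)
    (hbr11n : g11 < 0 → r11 = 0) (hbr11p : 0 < g11 → r11 = 1)
    -- partially separating: some message is sent with interior probability
    (hps : (0 < s0 ∧ s0 < 1) ∨ (0 < s1 ∧ s1 < 1))
    -- sender indifference γ^s(σ^r*) = C'
    (hind : (r10 - r00) * πs0 + (r11 - r01) * πs1 = C')
    -- monotonicity in receiver type (Lemma 2, eq. (6))
    (hmono0 : g00 < g01) (hmono1 : g10 < g11)
    -- prior-preference sign conditions (Lemma 2, eq. (7))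
    (hsgn0 : g00 + g10 < 0) (hsgn1 : g01 + g11 > 0) :
    g00 < 0 ∧ 0 < g11 :=
  stmt_7_general πs0 πs1 C' r00 r01 r10 r11 g00 g01 g10 g11 hπ0 hπ1 hC'0 hr00 hr11' hbr01p hbr10n
    hind hmono0 hmono1 hsgn0 hsgn1
end

section
/- At any partially-separating PBE, the following sign patterns of the receiver's payoff differences are impossible: if γ^r(σ^s*,m,θ₀^r) < 0 for both m and γ^r(σ^s*,m,θ₁^r) has the same sign for both m (both negative or both positive), then γ^s(σ^r*) = 0 ≠ C'; and if γ^r(σ^s*,m₁,θ₀^r) > 0 > γ^r(σ^s*,m₀,θ₀^r) and γ^r(σ^s*,m₁,θ₁^r) > 0 > γ^r(σ^s*,m₀,θ₁^r), then γ^s(σ^r*) = 1 ≠ C'. -/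
/-- at a partially-separating PBE the sign patterns forcing the
receiver to act identically after both messages are impossible, since they give
γ^s(σ^r*) = 0 ≠ C' or γ^s(σ^r*) = 1 ≠ C'. Notation as in Statement 7. -/
theorem stmt_8
    (πs0 πs1 C' : ℝ)
    (r00 r01 r10 r11 g00 g01 g10 g11 γs : ℝ)
    (hπ0 : 0 ≤ πs0) (hπ1 : 0 ≤ πs1) (hπ : πs0 + πs1 = 1)
    (hC'0 : 0 < C') (hC'1 : C' < 1)
    (hr00 : 0 ≤ r00) (hr00' : r00 ≤ 1) (hr01 : 0 ≤ r01) (hr01' : r01 ≤ 1)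
    (hr10 : 0 ≤ r10) (hr10' : r10 ≤ 1) (hr11 : 0 ≤ r11) (hr11' : r11 ≤ 1)
    (hγs : γs = (r10 - r00) * πs0 + (r11 - r01) * πs1)
    -- receiver best responses after (on-path) messages
    (hbr00n : g00 < 0 → r00 = 0) (hbr00p : 0 < g00 → r00 = 1)
    (hbr01n : g01 < 0 → r01 = 0) (hbr01p : 0 < g01 → r01 = 1)
    (hbr10n : g10 < 0 → r10 = 0) (hbr10p : 0 < g10 → r10 = 1)
    (hbr11n : g11 < 0 → r11 = 0) (hbr11p : 0 < g11 → r11 = 1) :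
    ((g00 < 0 ∧ g10 < 0) ∧ ((g01 < 0 ∧ g11 < 0) ∨ (0 < g01 ∧ 0 < g11)) →
        γs = 0 ∧ γs ≠ C')
      ∧ (g00 < 0 ∧ 0 < g10 ∧ g01 < 0 ∧ 0 < g11 →
        γs = 1 ∧ γs ≠ C') := by
  constructor
  · rintro ⟨⟨h00, h10⟩, h1⟩
    have e00 := hbr00n h00
    have e10 := hbr10n h10
    have hγ0 : γs = 0 := by
      rcases h1 with ⟨h01, h11⟩ | ⟨h01, h11⟩
      · rw [hγs, hbr01n h01, hbr11n h11, e00, e10]; ring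
      · rw [hγs, hbr01p h01, hbr11p h11, e00, e10]; ring
    exact ⟨hγ0, by rw [hγ0]; exact fun h => absurd hC'0 (h ▸ lt_irrefl 0)⟩
  · rintro ⟨h00, h10, h01, h11⟩
    have hγ1 : γs = 1 := by
      rw [hγs, hbr00n h00, hbr10p h10, hbr01n h01, hbr11p h11]
      linarith
    exact ⟨hγ1, by rw [hγ1]; exact fun h => absurd hC'1 (h ▸ lt_irrefl 1)⟩
end

section
/- Suppose C' ∈ (0,1), the receiver beliefs satisfy π^r(θ₀^s|θ₀^r)·|Δu^r₁₀(θ₀^s)| > π^r(θ₁^s|θ₀^r)·Δu^r₁₀(θ₁^s) and π^r(θ₁^s|θ₁^r)·Δu^r₁₀(θ₁^s) > π^r(θ₀^s|θ₁^r)·|Δu^r₁₀(θ₀^s)| (the prior preference assumptions), and π^r(θ₀^s|θ₁^r) < π^r(θ₀^s|θ₀^r). Then there exists a sender mixed strategy σ^s* with σ^s*(m₀|θ₀^s), σ^s*(m₀|θ₁^s) ∈ (0,1) satisfying simultaneously γ^r(σ^s*, m₁, θ₀^r) = 0 and γ^r(σ^s*, m₀, θ₁^r) = 0; moreover this σ^s*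 automatically satisfies γ^r(σ^s*,m₀,θ₀^r) < 0 and γ^r(σ^s*,m₁,θ₁^r) > 0. -/
/-!
Write `S = p00 Δ0 + p10 Δ1 < 0` and `T = p01 Δ0 + p11 Δ1 > 0` for the prior payoff differences of
the two receiver types. Since `γ(m₀) + γ(m₁) = S` for each receiver type, the two equilibrium
equations form a linear system with determinant `Δ0 Δ1 (p00 p11 - p10 p01)`, and the belief
ordering makes `p00 p11 - p10 p01 = p00 - p01` positive. Cramer's rule then writes `x`, `1 - x`,
`y` and `1 - y` as quotients of positive quantities, e.g. `1 - y = p00 T / (Δ1 (p00 p11 - p10 p01))`,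
and the two remaining inequalities say `γ(m₀ | θ₀^r) = S` and `γ(m₁ | θ₁^r) = T`.
-/

lemma det_pos_of_lt_of_add_eq_one {p00 p10 p01 p11 : ℝ} (hp0 : p00 + p10 = 1)
    (hp1 : p01 + p11 = 1) (hord : p01 < p00) : 0 < p00 * p11 - p10 * p01 := by
  have hdet : p00 * p11 - p10 * p01 = p00 - p01 := by
    rw [← sub_eq_of_eq_add' hp0.symm, ← sub_eq_of_eq_add' hp1.symm]
    ring
  linarith

lemma exists_solution_mem_Ioo_of_det_pos {p00 p10 p01 p11 Δ0 Δ1 : ℝ}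
    (hΔ0 : Δ0 < 0) (hΔ1 : 0 < Δ1)
    (hp00 : 0 < p00) (hp10 : 0 < p10) (hp01 : 0 < p01) (hp11 : 0 < p11)
    (hdet : 0 < p00 * p11 - p10 * p01)
    (hS : p00 * Δ0 + p10 * Δ1 < 0) (hT : 0 < p01 * Δ0 + p11 * Δ1) :
    ∃ x y : ℝ, 0 < x ∧ x < 1 ∧ 0 < y ∧ y < 1
      ∧ x * p00 * Δ0 + y * p10 * Δ1 = p00 * Δ0 + p10 * Δ1
      ∧ x * p01 * Δ0 + y * p11 * Δ1 = 0 := by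
  set d := p00 * p11 - p10 * p01
  set S := p00 * Δ0 + p10 * Δ1
  set T := p01 * Δ0 + p11 * Δ1
  have hx0 : 0 < -Δ0 * d := mul_pos (neg_pos.2 hΔ0) hdet
  have hy0 : 0 < Δ1 * d := mul_pos hΔ1 hdet
  refine ⟨-S * p11 / (-Δ0 * d), -S * p01 / (Δ1 * d), ?_, ?_, ?_, ?_, ?_, ?_⟩
  · exact div_pos (mul_pos (neg_pos.2 hS) hp11) hx0
  · have hx1 : 1 - -S * p11 / (-Δ0 * d) = p10 * T / (-Δ0 * d) := by
      field_simp [hΔ0.ne, hΔ1.ne', hdet.ne']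
      ring
    linarith [div_pos (mul_pos hp10 hT) hx0]
  · exact div_pos (mul_pos (neg_pos.2 hS) hp01) hy0
  · have hy1 : 1 - -S * p01 / (Δ1 * d) = p00 * T / (Δ1 * d) := by
      field_simp [hΔ0.ne, hΔ1.ne', hdet.ne']
      ring
    linarith [div_pos (mul_pos hp00 hT) hy0]
  · field_simp [hΔ0.ne, hΔ1.ne', hdet.ne']
    ring
  · field_simp [hΔ0.ne, hΔ1.ne', hdet.ne']
    ring

/-- `pij = π^r(θᵢ^s|θⱼ^r)`, `x = σ^s*(m₀|θ₀^s)`, `y = σ^s*(m₀|θ₁^s)`,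
`Δ0 = Δu^r₁₀(θ₀^s)`, `Δ1 = Δu^r₁₀(θ₁^s)`. -/
theorem stmt_9_general
    (p00 p10 p01 p11 Δ0 Δ1 : ℝ)
    (hΔ0 : Δ0 < 0) (hΔ1 : 0 < Δ1)
    (hp00 : 0 < p00) (hp10 : 0 < p10) (hp0 : p00 + p10 = 1)
    (hp01 : 0 < p01) (hp11 : 0 < p11) (hp1 : p01 + p11 = 1)
    -- prior preferences: θ₀^r prefers a₀, θ₁^r prefers a₁
    (hpref0 : p00 * (-Δ0) > p10 * Δ1)
    (hpref1 : p11 * Δ1 > p01 * (-Δ0))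
    -- belief ordering π^r(θ₀^s|θ₁^r) < π^r(θ₀^s|θ₀^r)
    (hord : p01 < p00) :
    ∃ x y : ℝ, 0 < x ∧ x < 1 ∧ 0 < y ∧ y < 1
      ∧ (1 - x) * p00 * Δ0 + (1 - y) * p10 * Δ1 = 0
      ∧ x * p01 * Δ0 + y * p11 * Δ1 = 0
      ∧ x * p00 * Δ0 + y * p10 * Δ1 < 0
      ∧ (1 - x) * p01 * Δ0 + (1 - y) * p11 * Δ1 > 0 := by
  have hS : p00 * Δ0 + p10 * Δ1 < 0 := by linarith
  have hT : 0 < p01 * Δ0 + p11 * Δ1 := by linarith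
  obtain ⟨x, y, hx0, hx1, hy0, hy1, hθ0, hθ1⟩ := exists_solution_mem_Ioo_of_det_pos hΔ0 hΔ1
    hp00 hp10 hp01 hp11 (det_pos_of_lt_of_add_eq_one hp0 hp1 hord) hS hT
  refine ⟨x, y, hx0, hx1, hy0, hy1, ?_, hθ1, ?_, ?_⟩
  · linear_combination -hθ0
  · linarith
  · linarith

/-- existence of the sender part of the belief-independent
partially-separating PBE: a strategy x = σ^s*(m₀|θ₀^s), y = σ^s*(m₀|θ₁^s) in
(0,1)² with γ^r(σ^s*,m₁,θ₀^r) = 0 and γ^r(σ^s*,m₀,θ₁^r) = 0, which moreover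
satisfies γ^r(σ^s*,m₀,θ₀^r) < 0 and γ^r(σ^s*,m₁,θ₁^r) > 0.
`pij = π^r(θᵢ^s|θⱼ^r)`, `Δ0 = Δu^r₁₀(θ₀^s) < 0 < Δ1 = Δu^r₁₀(θ₁^s)`. -/
theorem stmt_9
    (p00 p10 p01 p11 Δ0 Δ1 C' : ℝ)
    (hΔ0 : Δ0 < 0) (hΔ1 : 0 < Δ1)
    (hC'0 : 0 < C') (hC'1 : C' < 1)
    (hp00 : 0 < p00) (hp10 : 0 < p10) (hp0 : p00 + p10 = 1)
    (hp01 : 0 < p01) (hp11 : 0 < p11) (hp1 : p01 + p11 = 1)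
    -- prior preferences: θ₀^r prefers a₀, θ₁^r prefers a₁
    (hpref0 : p00 * (-Δ0) > p10 * Δ1)
    (hpref1 : p11 * Δ1 > p01 * (-Δ0))
    -- belief ordering π^r(θ₀^s|θ₁^r) < π^r(θ₀^s|θ₀^r)
    (hord : p01 < p00) :
    ∃ x y : ℝ, 0 < x ∧ x < 1 ∧ 0 < y ∧ y < 1
      ∧ (1 - x) * p00 * Δ0 + (1 - y) * p10 * Δ1 = 0
      ∧ x * p01 * Δ0 + y * p11 * Δ1 = 0
      ∧ x * p00 * Δ0 + y * p10 * Δ1 < 0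
      ∧ (1 - x) * p01 * Δ0 + (1 - y) * p11 * Δ1 > 0 :=
  stmt_9_general p00 p10 p01 p11 Δ0 Δ1 hΔ0 hΔ1 hp00 hp10 hp0 hp01 hp11 hp1 hpref0 hpref1 hord
end
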